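/- arXiv:1608.03137 — 2 statements merged into one kernel-verified Lean document; each statement's English description precedes it below -/
import Mathlib

section
/- Let G be a profinite group satisfying the maximum condition on closed subgroups. Then the following are equivalent: (i) every isolated orbital closed subgroup of G is normal in G; (ii) every orbital closed subgroup K of G contains a closed subgroup N of finite index in K such that N is normal in G. -/
/-- A closed subgroup `H` of a topological group `G` is *orbital* if it is closed and
its normalizer is open in `G`. -/
def IsOrbital {G : Type*} [Group G] [TopologicalSpace G] (H : Subgroup G) : Prop :=
  IsClosed (H : Set G) ∧ IsOpen (Subgroup.normalizer (H : Set G) : Set G)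

/-- An orbital closed subgroup `H` is *isolated orbital* if every orbital closed subgroup
properly containing `H` contains it with infinite index. -/
def IsIsolatedOrbital {G : Type*} [Group G] [TopologicalSpace G] (H : Subgroup G) : Prop :=
  IsOrbital H ∧ ∀ H' : Subgroup G, IsOrbital H' → H < H' → H.relIndex H' = 0

/-- `G` satisfies the maximum condition on closed subgroups. -/
def MaxClosedSubgroups (G : Type*) [Group G] [TopologicalSpace G] : Prop :=
  ∀ S : Set (Subgroup G), S.Nonempty → (∀ H ∈ S, IsClosed (H : Set G)) →
    ∃ M ∈ S, ∀ K ∈ S, M ≤ K → K = M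

/-- A topological group is *orbitally sound* if every isolated orbital closed subgroup
is normal. -/
def OrbitallySound (G : Type*) [Group G] [TopologicalSpace G] : Prop :=
  ∀ H : Subgroup G, IsIsolatedOrbital H → H.Normal

/-- The *isolator* of an orbital closed subgroup `H`: the closed subgroup topologically
generated by all orbital closed subgroups `L` containing `H` with finite index. -/
def isolator {G : Type*} [Group G] [TopologicalSpace G] [IsTopologicalGroup G]
    (H : Subgroup G) : Subgroup G :=
  (⨆ L ∈ {L : Subgroup G | IsOrbital L ∧ H ≤ L ∧ H.relIndex L ≠ 0}, L).topologicalClosure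

/-- The Roseblade subgroup `nio(G)`: the intersection of the normalizers of all isolated
orbital closed subgroups of `G`. -/
def nio (G : Type*) [Group G] [TopologicalSpace G] : Subgroup G :=
  ⨅ H ∈ {H : Subgroup G | IsIsolatedOrbital H}, Subgroup.normalizer (H : Set G)

/-!
(i) ⇒ (ii): by the maximum condition an orbital `K` lies with finite index in an isolated
orbital `M`, which is normal. As `K` has only finitely many conjugates, each of finite index in
`M`, their intersection, the normal core of `K`, has finite index in `K`.

(ii) ⇒ (i): let `N ⊴ G` be closed of finite index in an isolated orbital `H`. Modulo `N` the
conjugates of `H` are finitely many finite subgroups, so by Dietzmann's lemma the normal closure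
of `H` contains `N` with finite index. It is therefore a closed normal, hence orbital, subgroup
containing `H` with finite index, and isolation forces it to equal `H`.
-/

open scoped Pointwise

theorem Finset.exists_le_count_of_sum_sub_one_lt_length {α : Type*} [DecidableEq α] {s : Finset α}
    (f : α → ℕ) {l : List α} (hl : ∀ y ∈ l, y ∈ s) (hlt : ∑ x ∈ s, (f x - 1) < l.length) :
    ∃ x ∈ s, f x ≤ l.count x := by
  by_contra! h
  have hsum : ∑ x ∈ s, l.count x = l.length := by
    simpa using Multiset.sum_count_eq_card (m := (l : Multiset α)) hl
  have : ∑ x ∈ s, l.count x ≤ ∑ x ∈ s, (f x - 1) :=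
    Finset.sum_le_sum fun x hx => Nat.le_sub_one_of_lt (h x hx)
  omega

section Dietzmann

variable {G : Type*} [Group G] {X : Set G}

theorem exists_prod_eq_mul_prod_of_mem [DecidableEq G] (hX : ∀ g, ∀ x ∈ X, g * x * g⁻¹ ∈ X)
    {l : List G} (hl : ∀ y ∈ l, y ∈ X) {x : G} (hx : x ∈ l) :
    ∃ t : List G, (∀ y ∈ t, y ∈ X) ∧ t.length + 1 = l.length ∧ l.count x = t.count x + 1 ∧
      l.prod = x * t.prod := by
  obtain ⟨u, v, rfl⟩ := List.append_of_mem hx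
  refine ⟨u.map (MulAut.conj x⁻¹) ++ v, ?_, ?_, ?_, ?_⟩
  · simp only [List.mem_append, List.mem_map]
    rintro y (⟨z, hz, rfl⟩ | hy)
    · exact hX _ z (hl z (by simp [hz]))
    · exact hl y (by simp [hy])
  · simp only [List.length_append, List.length_map, List.length_cons]
    omega
  · have hu := List.count_map_of_injective u _ (MulAut.conj x⁻¹).injective x
    rw [show MulAut.conj x⁻¹ x = x by simp] at hu
    simp only [List.count_append, hu, List.count_cons_self]
    omega
  · simp only [List.prod_append, List.prod_cons, ← map_list_prod, MulAut.conj_apply]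
    group

theorem exists_prod_eq_pow_mul_prod [DecidableEq G] (hX : ∀ g, ∀ x ∈ X, g * x * g⁻¹ ∈ X)
    (x : G) (n : ℕ) {l : List G} (hl : ∀ y ∈ l, y ∈ X) (hn : n ≤ l.count x) :
    ∃ t : List G, (∀ y ∈ t, y ∈ X) ∧ t.length + n = l.length ∧ l.prod = x ^ n * t.prod := by
  induction n generalizing l with
  | zero => exact ⟨l, hl, rfl, by simp⟩
  | succ n ih =>
    obtain ⟨t, ht, hlen, hcount, hprod⟩ :=
      exists_prod_eq_mul_prod_of_mem hX hl (x := x) (List.count_pos_iff.mp (by omega))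
    obtain ⟨t', ht', hlen', hprod'⟩ := ih ht (by omega)
    exact ⟨t', ht', by omega, by rw [hprod, hprod', pow_succ', mul_assoc]⟩

/-- If a letter `x` occurs `orderOf x` times, collecting these occurrences at the front
(conjugating the letters they pass) and cancelling `x ^ orderOf x` shortens the word. -/
theorem exists_prod_eq_prod_of_length_le_sum [DecidableEq G]
    (hX : ∀ g, ∀ x ∈ X, g * x * g⁻¹ ∈ X) (hfin : X.Finite) (htor : ∀ x ∈ X, IsOfFinOrder x)
    {l : List G} (hl : ∀ y ∈ l, y ∈ X) :
    ∃ t : List G, (∀ y ∈ t, y ∈ X) ∧ t.length ≤ ∑ x ∈ hfin.toFinset, (orderOf x - 1) ∧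
      t.prod = l.prod := by
  induction hn : l.length using Nat.strong_induction_on generalizing l with
  | _ n ih =>
    by_cases hB : l.length ≤ ∑ x ∈ hfin.toFinset, (orderOf x - 1)
    · exact ⟨l, hl, hB, rfl⟩
    obtain ⟨x, hxX, hx⟩ := Finset.exists_le_count_of_sum_sub_one_lt_length orderOf
      (fun y hy => hfin.mem_toFinset.mpr (hl y hy)) (not_le.mp hB)
    have hpos := (htor x (hfin.mem_toFinset.mp hxX)).orderOf_pos
    obtain ⟨t, ht, hlen, hprod⟩ := exists_prod_eq_pow_mul_prod hX x (orderOf x) hl hx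
    obtain ⟨t', ht', hlen', hprod'⟩ := ih t.length (by omega) ht rfl
    exact ⟨t', ht', hlen', by rw [hprod', hprod, pow_orderOf_eq_one, one_mul]⟩

/-- **Dietzmann's lemma**. -/
theorem Subgroup.finite_closure_of_isOfFinOrder (hX : ∀ g, ∀ x ∈ X, g * x * g⁻¹ ∈ X)
    (hfin : X.Finite) (htor : ∀ x ∈ X, IsOfFinOrder x) : (closure X : Set G).Finite := by
  classical
  have := hfin.to_subtype
  refine ((List.finite_length_le X (∑ x ∈ hfin.toFinset, (orderOf x - 1))).image
    fun l => (l.map ((↑) : X → G)).prod).subset ?_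
  intro g hg
  replace hg : g ∈ (closure X).toSubmonoid := hg
  rw [closure_toSubmonoid_of_isOfFinOrder htor] at hg
  obtain ⟨l, hl, rfl⟩ := Submonoid.exists_list_of_mem_closure hg
  obtain ⟨t, ht, hlen, hprod⟩ := exists_prod_eq_prod_of_length_le_sum hX hfin htor hl
  obtain ⟨t', rfl⟩ : t ∈ Set.range (List.map ((↑) : X → G)) := by
    rwa [Set.range_list_map_coe]
  exact ⟨t', by simpa using hlen, hprod⟩

end Dietzmann

namespace Subgroup

variable {G : Type*} [Group G]

theorem finite_orbit_conjAct (H : Subgroup G) [(normalizer (H : Set G)).FiniteIndex] :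
    (MulAction.orbit (ConjAct G) H).Finite := by
  refine (Set.finite_range fun q : G ⧸ normalizer (H : Set G) =>
    ConjAct.toConjAct q.out • H).subset ?_
  rintro _ ⟨g, rfl⟩
  obtain ⟨n, hn⟩ := QuotientGroup.mk_out_eq_mul (normalizer (H : Set G)) (ConjAct.ofConjAct g)
  refine ⟨QuotientGroup.mk (ConjAct.ofConjAct g), ?_⟩
  simp only [hn, ConjAct.toConjAct_mul, mul_smul, conjAct_pointwise_smul_eq_self n.2,
    ConjAct.toConjAct_ofConjAct]

theorem finite_normalClosure (H : Subgroup G) [Finite H] [(normalizer (H : Set G)).FiniteIndex] :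
    Finite (normalClosure (H : Set G)) := by
  refine Set.finite_coe_iff.mpr (finite_closure_of_isOfFinOrder
    (fun _ _ => Group.conj_mem_conjugatesOfSet) ?_ ?_)
  · refine (H.finite_orbit_conjAct.biUnion (t := fun L : Subgroup G => (L : Set G))
      fun L ⟨g, hg⟩ => ?_).subset ?_
    · rw [← hg, coe_pointwise_smul]
      exact (Set.toFinite _).smul_set
    · intro x hx
      obtain ⟨a, ha, hax⟩ := Group.mem_conjugatesOfSet_iff.mp hx
      obtain ⟨c, rfl⟩ := isConj_iff.mp hax
      refine Set.mem_biUnion ⟨ConjAct.toConjAct c, rfl⟩ ?_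
      rw [← ConjAct.toConjAct_smul]
      exact smul_mem_pointwise_smul a _ H ha
  · intro x hx
    obtain ⟨a, ha, hax⟩ := Group.mem_conjugatesOfSet_iff.mp hx
    exact hax.isOfFinOrder
      (Submonoid.isOfFinOrder_coe.mpr (isOfFinOrder_of_finite (⟨a, ha⟩ : H)))

theorem relIndex_normalCore_ne_zero {K M : Subgroup G} [M.Normal]
    [(normalizer (K : Set G)).FiniteIndex] (h : K.relIndex M ≠ 0) :
    K.normalCore.relIndex M ≠ 0 := by
  have := K.finite_orbit_conjAct.to_subtype
  have hcore : K.normalCore = ⨅ L : MulAction.orbit (ConjAct G) K, (L : Subgroup G) := by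
    rw [normalCore_eq_iInf_conjAct]
    exact (iInf_range' (g := (·)) _).symm
  rw [hcore]
  refine relIndex_iInf_ne_zero ?_
  rintro ⟨_, g, rfl⟩
  rwa [← ‹M.Normal›.conjAct g, relIndex_pointwise_smul]

theorem isClosed_of_relIndex_ne_zero [TopologicalSpace G] [IsTopologicalGroup G]
    {N M : Subgroup G} [N.Normal] (hN : IsClosed (N : Set G)) (hNM : N ≤ M)
    (h : N.relIndex M ≠ 0) : IsClosed (M : Set G) := by
  have : T1Space (G ⧸ N) := QuotientGroup.t1Space_iff.mpr hN
  rw [← QuotientGroup.ker_mk' N, relIndex_ker] at h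
  have : Finite (M.map (QuotientGroup.mk' N)) := Nat.finite_of_card_ne_zero h
  have hM : M = (M.map (QuotientGroup.mk' N)).comap (QuotientGroup.mk' N) := by
    rw [comap_map_eq, QuotientGroup.ker_mk', sup_eq_left.mpr hNM]
  rw [hM, coe_comap]
  exact (Set.toFinite _).isClosed.preimage QuotientGroup.continuous_mk

theorem relIndex_normalClosure_ne_zero {H N : Subgroup G} [N.Normal]
    [(normalizer (H : Set G)).FiniteIndex] (h : N.relIndex H ≠ 0) :
    N.relIndex (normalClosure (H : Set G)) ≠ 0 := by
  have hsurj := QuotientGroup.mk'_surjective N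
  rw [← QuotientGroup.ker_mk' N, relIndex_ker] at h ⊢
  rw [map_normalClosure _ _ hsurj, ← coe_map]
  have : Finite (H.map (QuotientGroup.mk' N)) := Nat.finite_of_card_ne_zero h
  have : ((normalizer (H : Set G)).map (QuotientGroup.mk' N)).FiniteIndex :=
    ⟨ne_zero_of_dvd_ne_zero FiniteIndex.index_ne_zero (index_map_dvd _ hsurj)⟩
  have := finiteIndex_of_le (le_normalizer_map (H := H) (QuotientGroup.mk' N))
  have := finite_normalClosure (H.map (QuotientGroup.mk' N))
  exact Nat.card_pos.ne'

end Subgroup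

open Subgroup

section Orbital

variable {G : Type*} [Group G] [TopologicalSpace G]

theorem IsOrbital.of_normal {M : Subgroup G} [M.Normal] (hM : IsClosed (M : Set G)) :
    IsOrbital M :=
  ⟨hM, by rw [normalizer_eq_top_iff.mpr ‹_›]; exact isOpen_univ⟩

theorem IsIsolatedOrbital.eq_of_le {H M : Subgroup G} (hH : IsIsolatedOrbital H)
    (hM : IsOrbital M) (hHM : H ≤ M) (h : H.relIndex M ≠ 0) : M = H :=
  (eq_of_le_of_not_lt hHM fun hlt => h (hH.2 M hM hlt)).symm

theorem IsOrbital.exists_isIsolatedOrbital_le (hmax : MaxClosedSubgroups G) {K : Subgroup G}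
    (hK : IsOrbital K) : ∃ M, IsIsolatedOrbital M ∧ K ≤ M ∧ K.relIndex M ≠ 0 := by
  obtain ⟨M, ⟨hM, hKM, hKMfin⟩, hmaxM⟩ := hmax {L | IsOrbital L ∧ K ≤ L ∧ K.relIndex L ≠ 0}
    ⟨K, hK, le_rfl, by simp⟩ fun L hL => hL.1.1
  refine ⟨M, ⟨hM, fun L hL hML => ?_⟩, hKM, hKMfin⟩
  by_contra hMLfin
  exact hML.ne' (hmaxM L ⟨hL, hKM.trans hML.le, relIndex_ne_zero_trans hKMfin hMLfin⟩ hML.le)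

variable [IsTopologicalGroup G] [CompactSpace G]

theorem IsOrbital.finiteIndex_normalizer {K : Subgroup G} (hK : IsOrbital K) :
    (normalizer (K : Set G)).FiniteIndex :=
  have := quotient_finite_of_isOpen _ hK.2
  finiteIndex_of_finite_quotient

theorem IsIsolatedOrbital.normal_of_relIndex_ne_zero {H N : Subgroup G} [N.Normal]
    (hH : IsIsolatedOrbital H) (hN : IsClosed (N : Set G)) (hNH : N ≤ H)
    (h : N.relIndex H ≠ 0) : H.Normal := by
  have := hH.1.finiteIndex_normalizer
  have hNM := relIndex_normalClosure_ne_zero h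
  have hM := IsOrbital.of_normal (isClosed_of_relIndex_ne_zero hN (hNH.trans le_normalClosure) hNM)
  rw [← hH.eq_of_le hM le_normalClosure (mt (relIndex_eq_zero_of_le_left hNH) hNM)]
  infer_instance

end Orbital

theorem orbitallySound_iff_orbital_contains_normal_general {G : Type*} [Group G]
    [TopologicalSpace G] [IsTopologicalGroup G] [CompactSpace G]
    (hmax : MaxClosedSubgroups G) :
    (∀ H : Subgroup G, IsIsolatedOrbital H → H.Normal) ↔
    (∀ K : Subgroup G, IsOrbital K → ∃ N : Subgroup G,
      IsClosed (N : Set G) ∧ N ≤ K ∧ N.relIndex K ≠ 0 ∧ N.Normal) := by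
  constructor
  · intro hsound K hK
    obtain ⟨M, hM, hKM, hKMfin⟩ := hK.exists_isIsolatedOrbital_le hmax
    have := hsound M hM
    have := hK.finiteIndex_normalizer
    exact ⟨K.normalCore, K.normalCore_isClosed hK.1, K.normalCore_le,
      mt (relIndex_eq_zero_of_le_right hKM) (relIndex_normalCore_ne_zero hKMfin), inferInstance⟩
  · intro hcore H hH
    obtain ⟨N, hNc, hNH, hNHfin, hN⟩ := hcore H hH.1
    exact hH.normal_of_relIndex_ne_zero hNc hNH hNHfin

/-- For a profinite group `G` satisfying the maximum condition on closed subgroups, the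
following are equivalent: (i) every isolated orbital closed subgroup of `G` is normal;
(ii) every orbital closed subgroup `K` of `G` contains a closed subgroup `N` of finite
index in `K` which is normal in `G`. -/
theorem orbitallySound_iff_orbital_contains_normal {G : Type*} [Group G]
    [TopologicalSpace G] [IsTopologicalGroup G] [CompactSpace G] [T2Space G]
    [TotallyDisconnectedSpace G]
    (hmax : MaxClosedSubgroups G) :
    (∀ H : Subgroup G, IsIsolatedOrbital H → H.Normal) ↔
    (∀ K : Subgroup G, IsOrbital K → ∃ N : Subgroup G,
      IsClosed (N : Set G) ∧ N ≤ K ∧ N.relIndex K ≠ 0 ∧ N.Normal) :=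
  orbitallySound_iff_orbital_contains_normal_general hmax
end

section
/- Let p be a prime, G a profinite group, and H an open normal subgroup of G such that: (a) for every h ∈ H and every open subgroup U of H there exists n ≥ 0 with h^(p^n) ∈ U; and (b) for all g, h ∈ H and all n ≥ 0, g^(p^n) = h^(p^n) implies g = h. Suppose moreover that the FC-centre Δ(G) is contained in H. Then the centre of H equals the FC-centre of G: Z(H) = Δ(G). -/
/-!
If `z` is central in `H`, its centralizer contains the open, hence finite-index, subgroup `H`.
Conversely, let `x ∈ Δ(G)`. Its centralizer is closed of finite index, hence open, so by (a)
every `h ∈ H` has a power `h ^ p ^ n` commuting with `x`. Conjugation by `x` then fixes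
`h ^ p ^ n`, so it maps `h` to another `p ^ n`-th root of `h ^ p ^ n`, which by (b) is `h` itself.
-/

theorem eq_of_map_pow_eq {M F : Type*} [Monoid M] [FunLike F M M] [MonoidHomClass F M M]
    (f : F) {m : ℕ} (hroots : Function.Injective fun a : M => a ^ m) {a : M}
    (h : f (a ^ m) = a ^ m) : f a = a :=
  hroots (by simpa only [map_pow] using h)

namespace Subgroup

variable {G : Type*} [Group G]

theorem commute_of_commute_pow {H : Subgroup G} [H.Normal] {m : ℕ}
    (hroots : Function.Injective fun a : H => a ^ m) {x : G} {h : H}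
    (hx : Commute x ↑(h ^ m)) : Commute x h := by
  have hfix : MulAut.conjNormal x (h ^ m) = h ^ m :=
    Subtype.ext (by rw [MulAut.conjNormal_apply, hx.eq, mul_inv_cancel_right])
  have hconj : x * h * x⁻¹ = h := by
    rw [← MulAut.conjNormal_apply, eq_of_map_pow_eq _ hroots hfix]
  exact mul_inv_eq_iff_eq_mul.mp hconj

theorem index_centralizer_ne_zero_of_mem_center {H : Subgroup G} [H.FiniteIndex] {z : H}
    (hz : z ∈ center H) : (centralizer {(z : G)}).index ≠ 0 := by
  have hle : H ≤ centralizer {(z : G)} := fun g hg =>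
    mem_centralizer_singleton_iff.mpr (congrArg Subtype.val (mem_center_iff.mp hz ⟨g, hg⟩))
  have := finiteIndex_of_le hle
  exact FiniteIndex.index_ne_zero

theorem isOpen_centralizer_singleton [TopologicalSpace G] [IsTopologicalGroup G] [T2Space G]
    {x : G} (hx : (centralizer {x}).index ≠ 0) : IsOpen (centralizer {x} : Set G) :=
  have : (centralizer {x}).FiniteIndex := ⟨hx⟩
  isOpen_of_isClosed_of_finiteIndex _ (Set.isClosed_centralizer _)

theorem mem_center_of_isOpen_centralizer [TopologicalSpace G] {p : ℕ} {H : Subgroup G}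
    [H.Normal] (ha : ∀ h : H, ∀ U : Subgroup H, IsOpen (U : Set H) → ∃ n : ℕ, h ^ p ^ n ∈ U)
    (hb : ∀ g h : H, ∀ n : ℕ, g ^ p ^ n = h ^ p ^ n → g = h) {x : G} (hxH : x ∈ H)
    (hx : IsOpen (centralizer {x} : Set G)) : (⟨x, hxH⟩ : H) ∈ center H := by
  refine mem_center_iff.mpr fun h => Subtype.ext ?_
  obtain ⟨n, hn⟩ := ha h ((centralizer {x}).subgroupOf H) (hx.preimage continuous_subtype_val)
  have hpow : Commute x ↑(h ^ p ^ n) := (mem_centralizer_singleton_iff.mp hn).symm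
  exact (commute_of_commute_pow (hb · · n) hpow).symm.eq

end Subgroup

theorem centre_eq_fc_centre_general {p : ℕ} {G : Type*} [Group G]
    [TopologicalSpace G] [IsTopologicalGroup G] [CompactSpace G] [T2Space G]
    (H : Subgroup G) [H.Normal] (hHopen : IsOpen (H : Set G))
    (ha : ∀ h : H, ∀ U : Subgroup H, IsOpen (U : Set H) → ∃ n : ℕ, h ^ p ^ n ∈ U)
    (hb : ∀ g h : H, ∀ n : ℕ, g ^ p ^ n = h ^ p ^ n → g = h)
    (hΔ : ∀ x : G, (Subgroup.centralizer {x}).index ≠ 0 → x ∈ H) :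
    ((Subgroup.center H).map H.subtype : Set G) =
      {x : G | (Subgroup.centralizer {x}).index ≠ 0} := by
  have : Finite (G ⧸ H) := H.quotient_finite_of_isOpen hHopen
  have : H.FiniteIndex := Subgroup.finiteIndex_of_finite_quotient
  ext x
  constructor
  · rintro ⟨z, hz, rfl⟩
    exact Subgroup.index_centralizer_ne_zero_of_mem_center hz
  · intro hx
    exact ⟨⟨x, hΔ x hx⟩, Subgroup.mem_center_of_isOpen_centralizer ha hb (hΔ x hx)
      (Subgroup.isOpen_centralizer_singleton hx), rfl⟩

/-- Let `G` be a profinite group and `H` an open normal subgroup such that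
(a) every element of `H` has `p`-power torsion modulo every open subgroup of `H`, and
(b) `H` has unique `p`-power roots. If the FC-centre `Δ(G)` (the set of elements with
finite-index centralizer) is contained in `H`, then the centre of `H` equals `Δ(G)`. -/
theorem centre_eq_fc_centre {p : ℕ} (hp : p.Prime) {G : Type*} [Group G]
    [TopologicalSpace G] [IsTopologicalGroup G] [CompactSpace G] [T2Space G]
    [TotallyDisconnectedSpace G]
    (H : Subgroup G) [H.Normal] (hHopen : IsOpen (H : Set G))
    (ha : ∀ h : H, ∀ U : Subgroup H, IsOpen (U : Set H) → ∃ n : ℕ, h ^ p ^ n ∈ U)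
    (hb : ∀ g h : H, ∀ n : ℕ, g ^ p ^ n = h ^ p ^ n → g = h)
    (hΔ : ∀ x : G, (Subgroup.centralizer {x}).index ≠ 0 → x ∈ H) :
    ((Subgroup.center H).map H.subtype : Set G) =
      {x : G | (Subgroup.centralizer {x}).index ≠ 0} :=
  centre_eq_fc_centre_general H hHopen ha hb hΔ
end
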